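/- Let g ∈ SU(2), viewed as a 2×2 complex matrix, with g ≠ 1 and g ≠ −1, and write the (real) trace of g as tr g = 2·cos θ with θ ∈ (0, π) (i.e. θ = arccos((tr g)/2)). Then the matrix exponential satisfies exp( (θ / √(4 − (tr g)²)) • (g − g⁻¹) ) = g; equivalently, exp( (θ/(2 sin θ)) • (g − g⁻¹) ) = g. -/

import Mathlib

/-!
Since `g` has determinant one, Cayley–Hamilton gives `g⁻¹ = adj g = (tr g) • 1 - g`, so
`g - g⁻¹ = 2 (g - cos θ • 1)`, and `J = (g - cos θ • 1) / sin θ` satisfies `J² = -1`.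
Then `ℝ[J]` is a copy of `ℂ`, and Euler's formula `exp (θ J) = cos θ + sin θ • J = g` holds
there.
-/

open Matrix

/-- `SU2` is the special unitary group of 2×2 complex matrices,
identified with the 3-sphere `S³`. -/
abbrev SU2 : Submonoid (Matrix (Fin 2) (Fin 2) ℂ) := Matrix.specialUnitaryGroup (Fin 2) ℂ

noncomputable instance : Group SU2 :=
  { (inferInstance : Monoid SU2) with
    inv := fun A => ⟨star A.1, by
      obtain ⟨hu, hd⟩ := Matrix.mem_specialUnitaryGroup_iff.mp A.2
      refine Matrix.mem_specialUnitaryGroup_iff.mpr ⟨Unitary.star_mem hu, ?_⟩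
      rw [Matrix.star_eq_conjTranspose, Matrix.det_conjTranspose, hd, star_one]⟩
    inv_mul_cancel := fun A => Subtype.ext A.2.1.1 }

theorem NormedSpace.exp_smul_eq_cos_add_sin_of_mul_self_eq_neg_one {𝔸 : Type*} [NormedRing 𝔸]
    [NormedAlgebra ℝ 𝔸] {J : 𝔸} (hJ : J * J = -1) (θ : ℝ) :
    NormedSpace.exp (θ • J) = Real.cos θ • (1 : 𝔸) + Real.sin θ • J := by
  let _ : Algebra ℚ 𝔸 := Algebra.compHom 𝔸 (algebraMap ℚ ℝ)
  let φ : ℂ →ₐ[ℝ] 𝔸 := Complex.liftAux J hJ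
  have hφ : θ • J = φ (θ * Complex.I) := by simp [φ, Complex.liftAux_apply]
  rw [hφ, ← NormedSpace.map_exp φ φ.toLinearMap.continuous_of_finiteDimensional,
    ← Complex.exp_eq_exp_ℂ, Complex.exp_mul_I, ← Complex.ofReal_cos, ← Complex.ofReal_sin]
  simp [φ, Complex.liftAux_apply, Algebra.algebraMap_eq_smul_one, Complex.cos_ofReal_re,
    Complex.sin_ofReal_re]

theorem Matrix.adjugate_fin_two_eq_trace_smul_one_sub {R : Type*} [CommRing R]
    (A : Matrix (Fin 2) (Fin 2) R) :
    A.adjugate = A.trace • (1 : Matrix (Fin 2) (Fin 2) R) - A := by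
  ext i j
  fin_cases i <;> fin_cases j <;> simp [adjugate_fin_two, trace_fin_two]

theorem Matrix.mul_self_fin_two {R : Type*} [CommRing R] (A : Matrix (Fin 2) (Fin 2) R) :
    A * A = A.trace • A - A.det • (1 : Matrix (Fin 2) (Fin 2) R) := by
  have h := A.mul_adjugate
  rw [adjugate_fin_two_eq_trace_smul_one_sub, mul_sub, mul_smul_comm, mul_one] at h
  rw [← h]; abel

theorem Matrix.star_eq_adjugate_of_mem_specialUnitaryGroup {n α : Type*} [Fintype n]
    [DecidableEq n] [CommRing α] [StarRing α] {A : Matrix n n α}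
    (hA : A ∈ specialUnitaryGroup n α) : star A = A.adjugate := by
  rw [mem_specialUnitaryGroup_iff] at hA
  calc star A = star A * (A * A.adjugate) := by rw [mul_adjugate, hA.2, one_smul, mul_one]
    _ = A.adjugate := by rw [← mul_assoc, (mem_unitaryGroup_iff'.mp hA.1), one_mul]

theorem Matrix.exp_smul_sub_adjugate_fin_two {A : Matrix (Fin 2) (Fin 2) ℂ} {θ : ℝ}
    (hdet : A.det = 1) (htr : A.trace = ((2 * Real.cos θ : ℝ) : ℂ))
    (hsin : Real.sin θ ≠ 0) :
    NormedSpace.exp ((θ / (2 * Real.sin θ)) • (A - A.adjugate)) = A := by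
  set J : Matrix (Fin 2) (Fin 2) ℂ := (Real.sin θ)⁻¹ • (A - Real.cos θ • 1) with hJ
  have hAA : A * A = (2 * Real.cos θ) • A - 1 := by
    rw [A.mul_self_fin_two, htr, hdet, Complex.coe_smul, one_smul]
  have hJJ : J * J = -1 := by
    have hsin_sq : Real.cos θ ^ 2 - 1 = -Real.sin θ ^ 2 := by
      linarith [Real.sin_sq_add_cos_sq θ]
    calc J * J
        = (Real.sin θ)⁻¹ ^ 2 • (A * A - (2 * Real.cos θ) • A + Real.cos θ ^ 2 • 1) := by
          simp only [hJ, sub_mul, mul_sub, smul_mul_assoc, mul_smul_comm,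
            mul_one, one_mul, smul_smul]
          module
      _ = ((Real.sin θ)⁻¹ ^ 2 * (Real.cos θ ^ 2 - 1)) • 1 := by rw [hAA]; module
      _ = -1 := by rw [hsin_sq]; field_simp; rw [neg_one_smul]
  have hsub : (θ / (2 * Real.sin θ)) • (A - A.adjugate) = θ • J := by
    rw [adjugate_fin_two_eq_trace_smul_one_sub, htr, Complex.coe_smul, hJ, smul_smul]
    field_simp
    module
  -- matrices carry no global norm; the operator norm induces their entrywise topology, on which
  -- `exp` alone depends
  open scoped Norms.Operator in
  have hexp : NormedSpace.exp (θ • J) = Real.cos θ • 1 + Real.sin θ • J :=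
    NormedSpace.exp_smul_eq_cos_add_sin_of_mul_self_eq_neg_one hJJ θ
  rw [hsub, hexp, hJ, smul_smul, mul_inv_cancel₀ hsin, one_smul]
  abel

theorem exp_scaled_sub_inv_eq_self_general (g : SU2) (θ : ℝ) (hθ : θ ∈ Set.Ioo 0 Real.pi)
    (htr : ((g : Matrix (Fin 2) (Fin 2) ℂ)).trace = ((2 * Real.cos θ : ℝ) : ℂ)) :
    NormedSpace.exp ((θ / Real.sqrt (4 - (2 * Real.cos θ) ^ 2)) •
        ((g : Matrix (Fin 2) (Fin 2) ℂ) - ((g⁻¹ : SU2) : Matrix (Fin 2) (Fin 2) ℂ)))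
      = (g : Matrix (Fin 2) (Fin 2) ℂ) ∧
    NormedSpace.exp ((θ / (2 * Real.sin θ)) •
        ((g : Matrix (Fin 2) (Fin 2) ℂ) - ((g⁻¹ : SU2) : Matrix (Fin 2) (Fin 2) ℂ)))
      = (g : Matrix (Fin 2) (Fin 2) ℂ) := by
  have hinv :
      ((g⁻¹ : SU2) : Matrix (Fin 2) (Fin 2) ℂ) = (g : Matrix (Fin 2) (Fin 2) ℂ).adjugate :=
    star_eq_adjugate_of_mem_specialUnitaryGroup g.2
  have hsin : 0 < Real.sin θ := Real.sin_pos_of_pos_of_lt_pi hθ.1 hθ.2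
  have hsqrt : Real.sqrt (4 - (2 * Real.cos θ) ^ 2) = 2 * Real.sin θ := by
    rw [← Real.sqrt_sq (by positivity : 0 ≤ 2 * Real.sin θ)]
    congr 1
    linear_combination -4 * Real.sin_sq_add_cos_sq θ
  have hexp := exp_smul_sub_adjugate_fin_two g.2.2 htr hsin.ne'
  rw [hsqrt, hinv]
  exact ⟨hexp, hexp⟩

/-- For `g ∈ SU(2)` with `g ≠ ±1` and `tr g = 2 cos θ`, `θ ∈ (0, π)`, one has
`exp((θ/√(4 − (tr g)²)) (g − g⁻¹)) = g`, equivalently `exp((θ/(2 sin θ)) (g − g⁻¹)) = g`. -/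
theorem exp_scaled_sub_inv_eq_self (g : SU2) (θ : ℝ) (hθ : θ ∈ Set.Ioo 0 Real.pi)
    (hg1 : (g : Matrix (Fin 2) (Fin 2) ℂ) ≠ 1)
    (hgm1 : (g : Matrix (Fin 2) (Fin 2) ℂ) ≠ -1)
    (htr : ((g : Matrix (Fin 2) (Fin 2) ℂ)).trace = ((2 * Real.cos θ : ℝ) : ℂ)) :
    NormedSpace.exp ((θ / Real.sqrt (4 - (2 * Real.cos θ) ^ 2)) •
        ((g : Matrix (Fin 2) (Fin 2) ℂ) - ((g⁻¹ : SU2) : Matrix (Fin 2) (Fin 2) ℂ)))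
      = (g : Matrix (Fin 2) (Fin 2) ℂ) ∧
    NormedSpace.exp ((θ / (2 * Real.sin θ)) •
        ((g : Matrix (Fin 2) (Fin 2) ℂ) - ((g⁻¹ : SU2) : Matrix (Fin 2) (Fin 2) ℂ)))
      = (g : Matrix (Fin 2) (Fin 2) ℂ) :=
  exp_scaled_sub_inv_eq_self_general g θ hθ htr
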